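/- arXiv:1506.06980 — 4 statements merged into one kernel-verified Lean document; each statement's English description precedes it below -/
import Mathlib

section
/- Let c(x,y) = max{0, c₂(y) - c₁(x)} be a separable cost function with c₁(X) ⊆ c₂(X), and suppose c(x,y) ≠ 2 for all x,y. Then the set Γ(f) = {x : there exists y with f(y) = 1 and c(x,y) < 2} equals the set {x : f(Δ(x)) = 1} where Δ is any best response of Contestant to f. -/
/-!
Since costs are nonnegative and `f` takes the values `±1`, a maximizer of `f y - c x y` whose value
exceeds `-1` must have `f = 1`; a point `y` with `f y = 1` and `c x y < 2` provides such a value.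
Conversely, `c₁(X) ⊆ c₂(X)` gives every `x` a move of cost `0`, worth at least `-1`, so a best
response with `f = 1` costs at most `2`, hence less than `2` because the cost `2` never occurs.
-/

open scoped Classical

theorem exists_cost_eq_zero {X : Type*} {c₁ c₂ : X → ℝ} (hrange : Set.range c₁ ⊆ Set.range c₂)
    {c : X → X → ℝ} (hc : ∀ x y, c x y = max 0 (c₂ y - c₁ x)) (x : X) : ∃ y, c x y = 0 := by
  obtain ⟨y, hy⟩ := hrange ⟨x, rfl⟩
  exact ⟨y, by rw [hc, hy, sub_self, max_self]⟩

theorem exists_max_eq_one_of_lt_two {X : Type*} [Finite X] {f u : X → ℝ}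
    (hf : ∀ z, f z = 1 ∨ f z = -1) (hu : ∀ z, 0 ≤ u z) {y : X} (hy : f y = 1) (huy : u y < 2) :
    ∃ m, f m = 1 ∧ ∀ z, f z - u z ≤ f m - u m := by
  have : Nonempty X := ⟨y⟩
  obtain ⟨m, hm⟩ := Finite.exists_max fun z => f z - u z
  refine ⟨m, (hf m).resolve_right fun hm₁ => ?_, hm⟩
  linarith [hm y, hu m]

theorem le_two_of_isMax_of_eq_zero {X : Type*} {f u : X → ℝ} {d : X}
    (hd : ∀ y, f y - u y ≤ f d - u d) (hfd : f d = 1) {y : X} (hfy : -1 ≤ f y) (huy : u y = 0) :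
    u d ≤ 2 := by
  linarith [hd y]

theorem stmt_2_general {X : Type*} [Fintype X]
    (c₁ c₂ : X → ℝ) (hrange : Set.range c₁ ⊆ Set.range c₂)
    (c : X → X → ℝ) (hc : ∀ x y, c x y = max 0 (c₂ y - c₁ x))
    (hc2 : ∀ x y, c x y ≠ 2)
    (f : X → ℝ) (hf : ∀ x, f x = 1 ∨ f x = -1)
    (Δ : X → X)
    (hBR : ∀ x y, f y - c x y ≤ f (Δ x) - c x (Δ x))
    (hpref : ∀ x, (∃ y, f y = 1 ∧ ∀ z, f z - c x z ≤ f y - c x y) → f (Δ x) = 1) :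
    {x | ∃ y, f y = 1 ∧ c x y < 2} = {x | f (Δ x) = 1} := by
  have hf_ge : ∀ y, -1 ≤ f y := fun y => by rcases hf y with h | h <;> linarith
  ext x
  constructor
  · rintro ⟨y, hy, hxy⟩
    have hc_nonneg : ∀ z, 0 ≤ c x z := fun z => (hc x z).symm ▸ le_max_left _ _
    exact hpref x (exists_max_eq_one_of_lt_two hf hc_nonneg hy hxy)
  · intro hΔ
    obtain ⟨y, hy⟩ := exists_cost_eq_zero hrange hc x
    exact ⟨Δ x, hΔ, (le_two_of_isMax_of_eq_zero (hBR x) hΔ (hf_ge y) hy).lt_of_ne (hc2 x (Δ x))⟩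

theorem stmt_2 {X : Type*} [Fintype X] [Nonempty X]
    (c₁ c₂ : X → ℝ) (hrange : Set.range c₁ ⊆ Set.range c₂)
    (c : X → X → ℝ) (hc : ∀ x y, c x y = max 0 (c₂ y - c₁ x))
    (hc2 : ∀ x y, c x y ≠ 2)
    (f : X → ℝ) (hf : ∀ x, f x = 1 ∨ f x = -1)
    (Δ : X → X)
    (hBR : ∀ x y, f y - c x y ≤ f (Δ x) - c x (Δ x))
    (hpref : ∀ x, (∃ y, f y = 1 ∧ ∀ z, f z - c x z ≤ f y - c x y) → f (Δ x) = 1) :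
    {x | ∃ y, f y = 1 ∧ c x y < 2} = {x | f (Δ x) = 1} :=
  stmt_2_general c₁ c₂ hrange c hc hc2 f hf Δ hBR hpref
end

section
/- Let c be a separable cost function c(x,y) = max{0, c₂(y) - c₁(x)} with c₁(X) ⊆ c₂(X). For any classifier f : X → {-1,1}, define f'(y) = 1 if c₂(y) ≥ min{c₂(z) : f(z) = 1} and f'(y) = -1 otherwise (with f' ≡ -1 if f accepts no point). Then Γ(f) = Γ(f'), where Γ(g) = {x : ∃y, g(y) = 1 and c(x,y) < 2}. -/
open scoped Classical

theorem exists_le_of_sInf_le_coe {X : Type*} [Finite X] (p : X → Prop) (g : X → ℝ) {t : ℝ}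
    (h : sInf {r : EReal | ∃ z, p z ∧ r = (g z : EReal)} ≤ (t : EReal)) :
    ∃ z, p z ∧ g z ≤ t := by
  set S : Set EReal := {r | ∃ z, p z ∧ r = (g z : EReal)}
  have hS : S = (fun z => (g z : EReal)) '' {z | p z} := by
    ext r; simp only [S, Set.mem_ofPred_eq, Set.mem_image]; grind
  have hne : S.Nonempty := by
    by_contra hempty
    rw [Set.not_nonempty_iff_eq_empty.mp hempty, sInf_empty, top_le_iff] at h
    exact EReal.coe_ne_top t h
  have hfin : S.Finite := hS ▸ (Set.toFinite _).image _
  obtain ⟨z, hz, hmin⟩ := hne.csInf_mem hfin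
  exact ⟨z, hz, EReal.coe_le_coe_iff.mp (hmin ▸ h)⟩

theorem stmt_4_general {X : Type*} [Fintype X]
    (c₁ c₂ : X → ℝ)
    (c : X → X → ℝ) (hc : ∀ x y, c x y = max 0 (c₂ y - c₁ x))
    (f f' : X → ℝ)
    (hf' : ∀ y, (f' y = 1 ↔
        sInf {r : EReal | ∃ z, f z = 1 ∧ r = (c₂ z : EReal)} ≤ (c₂ y : EReal)) ∧
      (f' y = 1 ∨ f' y = -1)) :
    {x | ∃ y, f y = 1 ∧ c x y < 2} = {x | ∃ y, f' y = 1 ∧ c x y < 2} := by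
  ext x
  constructor
  · rintro ⟨y, hy, hcy⟩
    exact ⟨y, (hf' y).1.mpr (sInf_le ⟨y, hy, rfl⟩), hcy⟩
  · rintro ⟨y, hy, hcy⟩
    obtain ⟨z, hz, hzy⟩ := exists_le_of_sInf_le_coe _ c₂ ((hf' y).1.mp hy)
    refine ⟨z, hz, lt_of_le_of_lt ?_ hcy⟩
    rw [hc, hc]
    exact max_le_max_left 0 (sub_le_sub_right hzy _)

theorem stmt_4 {X : Type*} [Fintype X]
    (c₁ c₂ : X → ℝ) (hrange : Set.range c₁ ⊆ Set.range c₂)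
    (c : X → X → ℝ) (hc : ∀ x y, c x y = max 0 (c₂ y - c₁ x))
    (f f' : X → ℝ) (hf : ∀ x, f x = 1 ∨ f x = -1)
    (hf' : ∀ y, (f' y = 1 ↔
        sInf {r : EReal | ∃ z, f z = 1 ∧ r = (c₂ z : EReal)} ≤ (c₂ y : EReal)) ∧
      (f' y = 1 ∨ f' y = -1)) :
    {x | ∃ y, f y = 1 ∧ c x y < 2} = {x | ∃ y, f' y = 1 ∧ c x y < 2} :=
  stmt_4_general c₁ c₂ c hc f f' hf'
end

section
/- Let c be a separable cost function c(x,y) = max{0, c₂(y) - c₁(x)} with c₁(X) ⊆ c₂(X), and let D be a probability distribution on the finite set X. Then the strategic maximum OPT_h(D,c) = max over f of P_{x∼D}[h(x) = f(Δ(x))] (with Δ a best response to f, assuming c(x,y) ≠ 2 everywhere) equals 1 - min over s ∈ c₂(X) ∪ {∞} of P_{x∼D}[h(x) ≠ T_s(x)], where T_s(x) = 1 if c₁(x) > s - 2 and T_s(x) = -1 otherwise. -/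
/-!
A best response to a classifier `f` pays for a move only to reach the value `1`, and the gain
is `2`. So if `y₀` is a cheapest point (in `c₂`) with `f y₀ = 1`, a contestant `x` ends on `1`
exactly when `c x y₀ < 2`, i.e. when `c₁ x > c₂ y₀ - 2`: the outcome `f ∘ Δ` is the threshold
classifier `T_{c₂ y₀}`. Points costing nothing exist by `c₁(X) ⊆ c₂(X)`, and `c ≠ 2` rules out
ties. Conversely every `T_s` arises this way, from the classifier `[c₂ ≥ s]` (or `f ≡ -1` for
`s = ∞`), so the achievable accuracies are exactly `1 - P[h ≠ T_s]`.
-/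

open scoped Classical

section

open Finset

variable {X : Type*}

def IsClassifier (f : X → ℝ) : Prop := ∀ x, f x = 1 ∨ f x = -1

structure IsBestResponse (f : X → ℝ) (c : X → X → ℝ) (Δ : X → X) : Prop where
  maximizes : ∀ x y, f y - c x y ≤ f (Δ x) - c x (Δ x)
  tie_break : ∀ x, (∃ y, f y = 1 ∧ ∀ z, f z - c x z ≤ f y - c x y) → f (Δ x) = 1

def sepCost (c₁ c₂ : X → ℝ) (x y : X) : ℝ := max 0 (c₂ y - c₁ x)

/-- The classifier `T_s` of the paper, with `s = ⊤` standing for `s = ∞`. -/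
noncomputable def threshold (c₁ : X → ℝ) (s : EReal) (x : X) : ℝ :=
  if (c₁ x : EReal) > s - 2 then 1 else -1

def thresholds (c₂ : X → ℝ) : Set EReal := insert ⊤ (Set.range fun y => (c₂ y : EReal))

lemma sepCost_nonneg (c₁ c₂ : X → ℝ) (x y : X) : 0 ≤ sepCost c₁ c₂ x y := le_max_left _ _

lemma sub_le_sepCost (c₁ c₂ : X → ℝ) (x y : X) : c₂ y - c₁ x ≤ sepCost c₁ c₂ x y :=
  le_max_right _ _

lemma threshold_coe (c₁ : X → ℝ) (t : ℝ) (x : X) :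
    threshold c₁ t x = if t - 2 < c₁ x then 1 else -1 := by
  have h : ((c₁ x : EReal) > t - 2) ↔ t - 2 < c₁ x := by
    rw [gt_iff_lt, show (2 : EReal) = (2 : ℝ) from rfl, ← EReal.coe_sub, EReal.coe_lt_coe_iff]
  simp only [threshold, h]

lemma threshold_top (c₁ : X → ℝ) (x : X) : threshold c₁ ⊤ x = -1 :=
  if_neg not_top_lt

lemma thresholds_finite [Finite X] (c₂ : X → ℝ) : (thresholds c₂).Finite :=
  (Set.finite_range _).insert _

lemma sum_ite_eq_one_sub_sum_ite_ne [Fintype X] {w : X → ℝ} (hw1 : ∑ x, w x = 1) (g g' : X → ℝ) :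
    (∑ x, if g x = g' x then w x else 0) = 1 - ∑ x, if g x ≠ g' x then w x else 0 := by
  rw [eq_sub_iff_add_eq, ← sum_add_distrib, ← hw1]
  refine sum_congr rfl fun x _ => ?_
  by_cases hx : g x = g' x <;> simp [hx]

lemma sSup_image_one_sub {s : Set ℝ} (hs : s.Finite) (hne : s.Nonempty) :
    sSup ((fun e => 1 - e) '' s) = 1 - sInf s :=
  (Antitone.map_csInf_of_continuousAt (continuous_sub_left 1).continuousAt
    (fun _ _ hab => sub_le_sub_left hab 1) hne hs.bddBelow).symm

lemma exists_isBestResponse [Finite X] [Nonempty X] (f : X → ℝ) (c : X → X → ℝ) :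
    ∃ Δ, IsBestResponse f c Δ := by
  have hx : ∀ x, ∃ d, (∀ y, f y - c x y ≤ f d - c x d) ∧
      ((∃ y, f y = 1 ∧ ∀ z, f z - c x z ≤ f y - c x y) → f d = 1) := by
    intro x
    by_cases hone : ∃ y, f y = 1 ∧ ∀ z, f z - c x z ≤ f y - c x y
    · obtain ⟨y, hy1, hy⟩ := hone
      exact ⟨y, hy, fun _ => hy1⟩
    · obtain ⟨d, hd⟩ := Finite.exists_max fun y => f y - c x y
      exact ⟨d, hd, fun h => absurd h hone⟩
  choose Δ hΔ using hx
  exact ⟨Δ, fun x => (hΔ x).1, fun x => (hΔ x).2⟩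

namespace IsClassifier

variable {f k : X → ℝ} {d y : X}

lemma apply_max_eq_one (hf : IsClassifier f) (hd : ∀ z, f z - k z ≤ f d - k d) (hkd : 0 ≤ k d)
    (hy : f y = 1) (hky : k y < 2) : f d = 1 := by
  rcases hf d with hd1 | hd1
  · exact hd1
  · linarith [hd y]

lemma apply_max_eq_neg_one (hf : IsClassifier f) (hd : ∀ z, f z - k z ≤ f d - k d)
    (hky : k y = 0) (hk : ∀ z, f z = 1 → 2 < k z) : f d = -1 := by
  rcases hf d with hd1 | hd1
  · have := hk d hd1
    rcases hf y with hy | hy <;> linarith [hd y]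
  · exact hd1

variable {c₁ c₂ : X → ℝ} {Δ : X → X}

lemma apply_eq_threshold_of_forall_le (hrange : Set.range c₁ ⊆ Set.range c₂)
    (hc2 : ∀ x y, sepCost c₁ c₂ x y ≠ 2) (hf : IsClassifier f)
    (hΔ : ∀ x y, f y - sepCost c₁ c₂ x y ≤ f (Δ x) - sepCost c₁ c₂ x (Δ x)) {y₀ : X}
    (hy₀ : f y₀ = 1) (hmin : ∀ y, f y = 1 → c₂ y₀ ≤ c₂ y) (x : X) :
    f (Δ x) = threshold c₁ (c₂ y₀) x := by
  rw [threshold_coe]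
  split_ifs with hlt
  · exact hf.apply_max_eq_one (hΔ x) (sepCost_nonneg _ _ _ _) hy₀
      (max_lt two_pos (by linarith))
  · obtain ⟨y, hy⟩ := hrange ⟨x, rfl⟩
    refine hf.apply_max_eq_neg_one (y := y) (hΔ x) (by simp [sepCost, hy]) fun z hz => ?_
    have hle : 2 ≤ sepCost c₁ c₂ x z := by
      linarith [hmin z hz, sub_le_sepCost c₁ c₂ x z]
    exact lt_of_le_of_ne hle (hc2 x z).symm

lemma exists_threshold [Finite X] (hrange : Set.range c₁ ⊆ Set.range c₂)
    (hc2 : ∀ x y, sepCost c₁ c₂ x y ≠ 2) (hf : IsClassifier f)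
    (hΔ : ∀ x y, f y - sepCost c₁ c₂ x y ≤ f (Δ x) - sepCost c₁ c₂ x (Δ x)) :
    ∃ s ∈ thresholds c₂, ∀ x, f (Δ x) = threshold c₁ s x := by
  by_cases hone : ∃ y, f y = 1
  · obtain ⟨y₀, hy₀, hmin⟩ := Set.exists_min_image {y | f y = 1} c₂ (Set.toFinite _) hone
    exact ⟨c₂ y₀, Set.mem_insert_of_mem _ ⟨y₀, rfl⟩,
      hf.apply_eq_threshold_of_forall_le hrange hc2 hΔ hy₀ hmin⟩
  · refine ⟨⊤, Set.mem_insert _ _, fun x => ?_⟩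
    rw [threshold_top]
    exact (hf (Δ x)).resolve_left fun h => hone ⟨_, h⟩

end IsClassifier

lemma exists_isBestResponse_threshold [Finite X] [Nonempty X] {c₁ c₂ : X → ℝ}
    (hrange : Set.range c₁ ⊆ Set.range c₂) (hc2 : ∀ x y, sepCost c₁ c₂ x y ≠ 2) {s : EReal}
    (hs : s ∈ thresholds c₂) :
    ∃ f Δ, IsClassifier f ∧ IsBestResponse f (sepCost c₁ c₂) Δ ∧
      ∀ x, f (Δ x) = threshold c₁ s x := by
  rcases hs with rfl | ⟨y₀, rfl⟩
  · obtain ⟨Δ, hΔ⟩ := exists_isBestResponse (fun _ => (-1 : ℝ)) (sepCost c₁ c₂)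
    exact ⟨_, Δ, fun _ => Or.inr rfl, hΔ, fun x => (threshold_top c₁ x).symm⟩
  · set f : X → ℝ := fun y => if c₂ y₀ ≤ c₂ y then 1 else -1
    have hf : IsClassifier f := fun y => by
      by_cases hy : c₂ y₀ ≤ c₂ y <;> simp [f, hy]
    obtain ⟨Δ, hΔ⟩ := exists_isBestResponse f (sepCost c₁ c₂)
    refine ⟨f, Δ, hf, hΔ, hf.apply_eq_threshold_of_forall_le hrange hc2 hΔ.maximizes
      (if_pos le_rfl) fun y hy => ?_⟩
    by_contra hlt
    norm_num [f, hlt] at hy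

end

theorem stmt_5_general {X : Type*} [Fintype X] [Nonempty X]
    (w : X → ℝ) (hw1 : ∑ x, w x = 1)
    (c₁ c₂ : X → ℝ) (hrange : Set.range c₁ ⊆ Set.range c₂)
    (c : X → X → ℝ) (hc : ∀ x y, c x y = max 0 (c₂ y - c₁ x))
    (hc2 : ∀ x y, c x y ≠ 2)
    (h : X → ℝ) :
    sSup {p : ℝ | ∃ (f : X → ℝ) (Δ : X → X),
        (∀ x, f x = 1 ∨ f x = -1) ∧
        (∀ x y, f y - c x y ≤ f (Δ x) - c x (Δ x)) ∧
        (∀ x, (∃ y, f y = 1 ∧ ∀ z, f z - c x z ≤ f y - c x y) → f (Δ x) = 1) ∧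
        p = ∑ x, if h x = f (Δ x) then w x else 0}
      = 1 - sInf {e : ℝ | ∃ s ∈ insert (⊤ : EReal) (Set.range fun y => (c₂ y : EReal)),
          e = ∑ x, if h x ≠ (if ((c₁ x : EReal) > s - 2) then (1:ℝ) else -1) then w x else 0} := by
  obtain rfl : c = sepCost c₁ c₂ := funext₂ hc
  set error : EReal → ℝ := fun s => ∑ x, if h x ≠ threshold c₁ s x then w x else 0
  convert sSup_image_one_sub ((thresholds_finite c₂).image error)
    (Set.Nonempty.image _ ⟨⊤, Set.mem_insert _ _⟩) using 3
  · rw [Set.image_image]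
    ext p
    constructor
    · rintro ⟨f, Δ, hf, hle, -, rfl⟩
      obtain ⟨s, hs, hfs⟩ := IsClassifier.exists_threshold hrange hc2 hf hle
      exact ⟨s, hs, by simp only [hfs, error, sum_ite_eq_one_sub_sum_ite_ne hw1]⟩
    · rintro ⟨s, hs, rfl⟩
      obtain ⟨f, Δ, hf, hΔ, hfs⟩ := exists_isBestResponse_threshold hrange hc2 hs
      exact ⟨f, Δ, hf, hΔ.maximizes, hΔ.tie_break,
        by simp only [hfs, error, sum_ite_eq_one_sub_sum_ite_ne hw1]⟩
  · ext e
    exact ⟨fun ⟨s, hs, he⟩ => ⟨s, hs, he.symm⟩, fun ⟨s, hs, he⟩ => ⟨s, hs, he.symm⟩⟩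

theorem stmt_5 {X : Type*} [Fintype X] [Nonempty X]
    (w : X → ℝ) (hw : ∀ x, 0 ≤ w x) (hw1 : ∑ x, w x = 1)
    (c₁ c₂ : X → ℝ) (hrange : Set.range c₁ ⊆ Set.range c₂)
    (c : X → X → ℝ) (hc : ∀ x y, c x y = max 0 (c₂ y - c₁ x))
    (hc2 : ∀ x y, c x y ≠ 2)
    (h : X → ℝ) (hh : ∀ x, h x = 1 ∨ h x = -1) :
    sSup {p : ℝ | ∃ (f : X → ℝ) (Δ : X → X),
        (∀ x, f x = 1 ∨ f x = -1) ∧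
        (∀ x y, f y - c x y ≤ f (Δ x) - c x (Δ x)) ∧
        (∀ x, (∃ y, f y = 1 ∧ ∀ z, f z - c x z ≤ f y - c x y) → f (Δ x) = 1) ∧
        p = ∑ x, if h x = f (Δ x) then w x else 0}
      = 1 - sInf {e : ℝ | ∃ s ∈ insert (⊤ : EReal) (Set.range fun y => (c₂ y : EReal)),
          e = ∑ x, if h x ≠ (if ((c₁ x : EReal) > s - 2) then (1:ℝ) else -1) then w x else 0} :=
  stmt_5_general w hw1 c₁ c₂ hrange c hc hc2 h
end

section
/- Let X be finite with a probability distribution D, let c be separable with c₁(X) ⊆ c₂(X) and c(x,y) ≠ 2 everywhere, and let h : X → {-1,1}. Suppose s* ∈ c₂(X) ∪ {∞} satisfies err(s*) ≤ inf{err(s) : s ∈ c₂(X) ∪ {∞}} + ε, where err(s) = P_{x∼D}[h(x) ≠ T_{s-2}(x)] and T_t(x) = 1 iff c₁(x) > t. Then the classifier f = (x ↦ 1 if c₂(x) ≥ s*, else -1) achieves Jury payoff P_{x∼D}[h(x) = f(Δ(x))] ≥ OPT_h(D,c) - ε, where Δ is Contestant's best response to f and OPT_h(D,c) is the maximum over all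 classifiers g of P_{x∼D}[h(x) = g(Δ_g(x))]. -/
/-!
Whatever classifier `g` Jury publishes, the classification `g ∘ Δ_g` it induces is a threshold
classifier on `c₁`: if `s` is the least `c₂`-value of a point accepted by `g` (`s = ⊤` if there
is none), then `x` ends up accepted iff `c₁ x > s - 2`. Indeed reaching an accepted point costs
at least `s - c₁ x`, which is worth paying only below `2`, while staying rejected is free since
`c₁(X) ⊆ c₂(X)`; the case of cost exactly `2` is excluded. Hence the payoff of `g` is
`1 - err s` for some `s ∈ c₂(X) ∪ {⊤}`, and for the classifier `f` built from `s*` the least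
accepted `c₂`-value is `s*` itself, so its payoff `1 - err s*` is within `ε` of the optimum.
-/

open Finset

section

variable {X : Type*}

noncomputable def thresholdClassifier (c₁ : X → ℝ) (t : EReal) (x : X) : ℝ :=
  if (c₁ x : EReal) > t then 1 else -1

structure IsBestResponse_s19 (c : X → X → ℝ) (g : X → ℝ) (Δ : X → X) : Prop where
  le_apply : ∀ x y, g y - c x y ≤ g (Δ x) - c x (Δ x)
  apply_eq_one : ∀ x, (∃ y, g y = 1 ∧ ∀ z, g z - c x z ≤ g y - c x y) → g (Δ x) = 1

noncomputable def acceptThreshold [Fintype X] (g c₂ : X → ℝ) : EReal :=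
  (univ.filter fun y => g y = 1).inf fun y => (c₂ y : EReal)

section acceptThreshold

variable [Fintype X] {g c₂ : X → ℝ}

lemma acceptThreshold_le {y : X} (hy : g y = 1) : acceptThreshold g c₂ ≤ c₂ y :=
  Finset.inf_le (by simpa using hy)

lemma exists_acceptThreshold_eq (hne : acceptThreshold g c₂ ≠ ⊤) :
    ∃ y, g y = 1 ∧ (c₂ y : EReal) = acceptThreshold g c₂ := by
  have hnonempty : (univ.filter fun y => g y = 1).Nonempty :=
    nonempty_iff_ne_empty.2 fun hempty => hne (by rw [acceptThreshold, hempty, Finset.inf_empty])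
  obtain ⟨y, hy, hmin⟩ := exists_mem_eq_inf _ hnonempty fun y => (c₂ y : EReal)
  exact ⟨y, by simpa using hy, hmin.symm⟩

lemma acceptThreshold_mem :
    acceptThreshold g c₂ ∈ insert ⊤ (Set.range fun y => (c₂ y : EReal)) := by
  by_cases htop : acceptThreshold g c₂ = ⊤
  · exact Or.inl htop
  · obtain ⟨y, -, hy⟩ := exists_acceptThreshold_eq htop
    exact Or.inr ⟨y, hy⟩

lemma acceptThreshold_eq_of_iff {s : EReal}
    (hs : s ∈ insert ⊤ (Set.range fun y => (c₂ y : EReal))) (hg : ∀ y, g y = 1 ↔ s ≤ c₂ y) :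
    acceptThreshold g c₂ = s := by
  refine le_antisymm ?_ (Finset.le_inf fun y hy => (hg y).1 (by simpa using hy))
  rcases hs with rfl | ⟨y, rfl⟩
  · exact le_top
  · exact acceptThreshold_le ((hg y).2 le_rfl)

end acceptThreshold

namespace IsBestResponse_s19

variable {c₁ c₂ g : X → ℝ} {c : X → X → ℝ} {Δ : X → X}

lemma apply_eq_one_of_lt (hc : ∀ x y, c x y = max 0 (c₂ y - c₁ x))
    (hg : ∀ y, g y = 1 ∨ g y = -1) (hΔ : IsBestResponse_s19 c g Δ) {x y₀ : X} (hy₀ : g y₀ = 1)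
    (hmin : ∀ y, g y = 1 → c₂ y₀ ≤ c₂ y) (hx : c₂ y₀ - 2 < c₁ x) : g (Δ x) = 1 := by
  refine hΔ.apply_eq_one x ⟨y₀, hy₀, fun z => ?_⟩
  have hcy₀ : c x y₀ < 2 := by
    rw [hc]
    exact max_lt two_pos (by linarith)
  rcases hg z with hz | hz
  · have : c x y₀ ≤ c x z := by
      rw [hc, hc]
      exact max_le_max le_rfl (by linarith [hmin z hz])
    rw [hz, hy₀]
    linarith
  · have : 0 ≤ c x z := by
      rw [hc]
      exact le_max_left _ _
    rw [hz, hy₀]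
    linarith

lemma apply_ne_one_of_lt (hc : ∀ x y, c x y = max 0 (c₂ y - c₁ x))
    (hrange : Set.range c₁ ⊆ Set.range c₂) (hg : ∀ y, g y = 1 ∨ g y = -1)
    (hΔ : IsBestResponse_s19 c g Δ) {x : X} {s : ℝ} (hmin : ∀ y, g y = 1 → s ≤ c₂ y)
    (hx : c₁ x < s - 2) : g (Δ x) ≠ 1 := by
  intro hΔx
  obtain ⟨z, hz⟩ := hrange ⟨x, rfl⟩
  have hgz : g z = -1 := (hg z).resolve_left fun h => by linarith [hmin z h]
  have hcz : c x z = 0 := by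
    rw [hc, hz, sub_self, max_self]
  have hcΔ : s - c₁ x ≤ c x (Δ x) := by
    rw [hc]
    exact le_max_of_le_right (by linarith [hmin _ hΔx])
  have hstay := hΔ.le_apply x z
  rw [hgz, hcz, hΔx] at hstay
  linarith

lemma apply_eq_thresholdClassifier [Fintype X] (hc : ∀ x y, c x y = max 0 (c₂ y - c₁ x))
    (hc2 : ∀ x y, c x y ≠ 2) (hrange : Set.range c₁ ⊆ Set.range c₂)
    (hg : ∀ y, g y = 1 ∨ g y = -1) (hΔ : IsBestResponse_s19 c g Δ) (x : X) :
    g (Δ x) = thresholdClassifier c₁ (acceptThreshold g c₂ - 2) x := by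
  by_cases htop : acceptThreshold g c₂ = ⊤
  · have hrej : g (Δ x) ≠ 1 := fun h =>
      EReal.coe_ne_top _ (top_le_iff.1 (htop ▸ acceptThreshold_le h))
    have hsub : (⊤ : EReal) - 2 = ⊤ := EReal.top_sub_coe 2
    rw [thresholdClassifier, htop, hsub, if_neg not_top_lt]
    exact (hg _).resolve_left hrej
  obtain ⟨y₀, hy₀, hs⟩ := exists_acceptThreshold_eq htop
  have hmin : ∀ y, g y = 1 → c₂ y₀ ≤ c₂ y := fun y hy =>
    EReal.coe_le_coe_iff.1 (hs ▸ acceptThreshold_le hy)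
  have hsub : (c₂ y₀ : EReal) - 2 = ((c₂ y₀ - 2 : ℝ) : EReal) := rfl
  rw [thresholdClassifier, ← hs, hsub]
  split_ifs with hlt
  · exact hΔ.apply_eq_one_of_lt hc hg hy₀ hmin (EReal.coe_lt_coe_iff.1 hlt)
  · have hle : c₁ x ≤ c₂ y₀ - 2 := EReal.coe_le_coe_iff.1 (not_lt.1 hlt)
    have hne : c₁ x ≠ c₂ y₀ - 2 := fun heq => hc2 x y₀ (by rw [hc, heq]; norm_num)
    exact (hg _).resolve_left (hΔ.apply_ne_one_of_lt hc hrange hg hmin (hle.lt_of_ne hne))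

end IsBestResponse_s19

lemma sum_ite_eq_sub_sum_ite_not [Fintype X] {M : Type*} [AddCommGroup M] (w : X → M)
    (p : X → Prop) [DecidablePred p] :
    (∑ x, if p x then w x else 0) = ∑ x, w x - ∑ x, if ¬p x then w x else 0 := by
  rw [eq_sub_iff_add_eq, ← sum_add_distrib]
  exact sum_congr rfl fun x _ => by by_cases hx : p x <;> simp [hx]

end

theorem stmt_19_general {X : Type*} [Fintype X]
    (w : X → ℝ) (hw1 : ∑ x, w x = 1)
    (c₁ c₂ : X → ℝ) (hrange : Set.range c₁ ⊆ Set.range c₂)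
    (c : X → X → ℝ) (hc : ∀ x y, c x y = max 0 (c₂ y - c₁ x))
    (hc2 : ∀ x y, c x y ≠ 2)
    (h : X → ℝ)
    (err : EReal → ℝ)
    (herr : ∀ s, err s
      = ∑ x, if h x ≠ (if ((c₁ x : EReal) > s - 2) then (1:ℝ) else -1) then w x else 0)
    (ε : ℝ)
    (sstar : EReal)
    (hsmem : sstar ∈ insert (⊤ : EReal) (Set.range fun y => (c₂ y : EReal)))
    (hopt : err sstar ≤ sInf {e : ℝ |
      ∃ s ∈ insert (⊤ : EReal) (Set.range fun y => (c₂ y : EReal)), e = err s} + ε)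
    (f : X → ℝ) (hfdef : ∀ x, (f x = 1 ↔ (c₂ x : EReal) ≥ sstar) ∧ (f x = 1 ∨ f x = -1))
    (Δ : X → X)
    (hBR : ∀ x y, f y - c x y ≤ f (Δ x) - c x (Δ x))
    (hpref : ∀ x, (∃ y, f y = 1 ∧ ∀ z, f z - c x z ≤ f y - c x y) → f (Δ x) = 1) :
    (∑ x, if h x = f (Δ x) then w x else 0)
      ≥ sSup {p : ℝ | ∃ (g : X → ℝ) (Δg : X → X),
          (∀ x, g x = 1 ∨ g x = -1) ∧
          (∀ x y, g y - c x y ≤ g (Δg x) - c x (Δg x)) ∧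
          (∀ x, (∃ y, g y = 1 ∧ ∀ z, g z - c x z ≤ g y - c x y) → g (Δg x) = 1) ∧
          p = ∑ x, if h x = g (Δg x) then w x else 0} - ε := by
  have payoff_eq : ∀ (g : X → ℝ) (Δg : X → X), (∀ x, g x = 1 ∨ g x = -1) →
      IsBestResponse_s19 c g Δg →
      (∑ x, if h x = g (Δg x) then w x else 0) = 1 - err (acceptThreshold g c₂) := by
    intro g Δg hg hΔg
    simp only [herr, hΔg.apply_eq_thresholdClassifier hc hc2 hrange hg]
    rw [sum_ite_eq_sub_sum_ite_not w, hw1]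
    rfl
  have hbdd : BddBelow {e : ℝ |
      ∃ s ∈ insert (⊤ : EReal) (Set.range fun y => (c₂ y : EReal)), e = err s} := by
    have hfin := ((Set.finite_range fun y => (c₂ y : EReal)).insert ⊤).image err
    refine (hfin.subset ?_).bddBelow
    rintro _ ⟨s, hs, rfl⟩
    exact ⟨s, hs, rfl⟩
  have hf : ∀ x, f x = 1 ∨ f x = -1 := fun x => (hfdef x).2
  rw [ge_iff_le, sub_le_iff_le_add, payoff_eq f Δ hf ⟨hBR, hpref⟩,
    acceptThreshold_eq_of_iff hsmem fun y => (hfdef y).1]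
  refine csSup_le ⟨_, f, Δ, hf, hBR, hpref, rfl⟩ ?_
  rintro _ ⟨g, Δg, hg, hBRg, hprefg, rfl⟩
  rw [payoff_eq g Δg hg ⟨hBRg, hprefg⟩]
  have hinf := csInf_le hbdd ⟨_, acceptThreshold_mem (g := g), rfl⟩
  linarith

theorem stmt_19 {X : Type*} [Fintype X] [Nonempty X]
    (w : X → ℝ) (hw : ∀ x, 0 ≤ w x) (hw1 : ∑ x, w x = 1)
    (c₁ c₂ : X → ℝ) (hrange : Set.range c₁ ⊆ Set.range c₂)
    (c : X → X → ℝ) (hc : ∀ x y, c x y = max 0 (c₂ y - c₁ x))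
    (hc2 : ∀ x y, c x y ≠ 2)
    (h : X → ℝ) (hh : ∀ x, h x = 1 ∨ h x = -1)
    (err : EReal → ℝ)
    (herr : ∀ s, err s
      = ∑ x, if h x ≠ (if ((c₁ x : EReal) > s - 2) then (1:ℝ) else -1) then w x else 0)
    (ε : ℝ) (hε : 0 ≤ ε)
    (sstar : EReal)
    (hsmem : sstar ∈ insert (⊤ : EReal) (Set.range fun y => (c₂ y : EReal)))
    (hopt : err sstar ≤ sInf {e : ℝ |
      ∃ s ∈ insert (⊤ : EReal) (Set.range fun y => (c₂ y : EReal)), e = err s} + ε)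
    (f : X → ℝ) (hfdef : ∀ x, (f x = 1 ↔ (c₂ x : EReal) ≥ sstar) ∧ (f x = 1 ∨ f x = -1))
    (Δ : X → X)
    (hBR : ∀ x y, f y - c x y ≤ f (Δ x) - c x (Δ x))
    (hpref : ∀ x, (∃ y, f y = 1 ∧ ∀ z, f z - c x z ≤ f y - c x y) → f (Δ x) = 1) :
    (∑ x, if h x = f (Δ x) then w x else 0)
      ≥ sSup {p : ℝ | ∃ (g : X → ℝ) (Δg : X → X),
          (∀ x, g x = 1 ∨ g x = -1) ∧
          (∀ x y, g y - c x y ≤ g (Δg x) - c x (Δg x)) ∧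
          (∀ x, (∃ y, g y = 1 ∧ ∀ z, g z - c x z ≤ g y - c x y) → g (Δg x) = 1) ∧
          p = ∑ x, if h x = g (Δg x) then w x else 0} - ε :=
  stmt_19_general w hw1 c₁ c₂ hrange c hc hc2 h err herr ε sstar hsmem hopt f hfdef Δ hBR hpref
end
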